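/- Let m, n ≥ 2 be integers. (a) If α > 0 and α ∉ ℕ ∪ [n−2,∞), then there exist m×m Hermitian positive semidefinite matrices H_st (1 ≤ s,t ≤ n) that pairwise commute, such that the mn×mn block matrix (H_st)_{s,t=1}^n is positive semidefinite but (H_st^α)_{s,t=1}^n is not positive semidefinite. (b) If α < 0, then there exist pairwise commuting real symmetric positive definite m×m matrices H_st (1 ≤ s,t ≤ n) such that (H_st)_{s,t=1}^n is positive semidefinite but (H_st^α)_{s,t=1}^n is not positive semidefinite. -/

import Mathlib

/-!
Take scalar blocks `H s t = A s t • 1`. Then `(H s t)` is `A ⊗ₖ 1` and `(H s t ^ α)` is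
`A.map (· ^ α) ⊗ₖ 1`, so it suffices to find an entrywise positive positive semidefinite `A`
whose entrywise `α`-th power is not positive semidefinite. We take `A = (1 + ε s t)`, a rank-two
matrix. Choose `y` with `∑ y s * s ^ j = 0` for `j < K` and `∑ y s * s ^ K = 1` (Vandermonde); then
the `j`-th derivative of `Q ε = ∑ y s * y t * (1 + ε s t) ^ α` at `0` is
`α (α - 1) ⋯ (α - j + 1) * (∑ y s * s ^ j) ^ 2`, which vanishes for `j < K` and is
`α (α - 1) ⋯ (α - K + 1)` for `j = K`. When this falling factorial is negative
(`K = ⌊α⌋ + 2` in (a), `K = 1` in (b)), `Q ε < 0` for small `ε > 0`.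
-/

open scoped Classical ComplexOrder

/-- The `mn × mn` block matrix whose `(s,t)` block is the `m × m` matrix `H s t`. -/
def blockM {m n : ℕ} (H : Fin n → Fin n → Matrix (Fin m) (Fin m) ℂ) :
    Matrix (Fin n × Fin m) (Fin n × Fin m) ℂ :=
  Matrix.of fun p q => H p.1 q.1 p.2 q.2

/-- `f_α(x) := x^α` for `x ≠ 0`, with the convention `f_α(0) := 0`. -/
noncomputable def fPow (α : ℝ) (x : ℝ) : ℝ := if x = 0 then 0 else x ^ α

/-- `φ_α(x) := |x|^α` for `x ≠ 0`, with `φ_α(0) := 0`. -/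
noncomputable def phiPow (α : ℝ) (x : ℝ) : ℝ := if x = 0 then 0 else |x| ^ α

/-- `ψ_α(x) := sgn(x)|x|^α` for `x ≠ 0`, with `ψ_α(0) := 0`. -/
noncomputable def psiPow (α : ℝ) (x : ℝ) : ℝ := if x = 0 then 0 else Real.sign x * |x| ^ α

/-- Apply a function `f : ℝ → ℂ` to a Hermitian matrix via its spectral decomposition
(junk value `0` on non-Hermitian input). -/
noncomputable def hermFun {m : ℕ} (f : ℝ → ℂ) (B : Matrix (Fin m) (Fin m) ℂ) :
    Matrix (Fin m) (Fin m) ℂ :=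
  if hB : B.IsHermitian then
    (hB.eigenvectorUnitary : Matrix (Fin m) (Fin m) ℂ) *
      Matrix.diagonal (fun i => f (hB.eigenvalues i)) *
      (star (hB.eigenvectorUnitary : Matrix (Fin m) (Fin m) ℂ))
  else 0

/-- `B^α` for a Hermitian matrix `B`, computed via the spectral decomposition of `B`,
with the convention `0^α := 0` on the spectrum. -/
noncomputable def hermPow {m : ℕ} (α : ℝ) (B : Matrix (Fin m) (Fin m) ℂ) :
    Matrix (Fin m) (Fin m) ℂ :=
  hermFun (fun x => ((fPow α x : ℝ) : ℂ)) B

/-- The power function `Ψ_{α,β}` on `ℂ`: `Ψ_{α,β}(r e^{iθ}) := r^α e^{iβθ}` for `r > 0`,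
`θ ∈ (-π, π]`, and `Ψ_{α,β}(0) := 0`. -/
noncomputable def Psi (α β : ℝ) (z : ℂ) : ℂ :=
  if z = 0 then 0
  else ((‖z‖ ^ α : ℝ) : ℂ) * Complex.exp (((β * z.arg : ℝ) : ℂ) * Complex.I)

/-- The 3×3 Hermitian matrix `T(t, θ)` with unit diagonal and off-diagonal entries
`T₁₂ = t₃`, `T₁₃ = t₂ e^{iθ}`, `T₂₃ = t₁`. -/
noncomputable def T3 (t1 t2 t3 θ : ℝ) : Matrix (Fin 3) (Fin 3) ℂ :=
  !![1, (t3 : ℂ), (t2 : ℂ) * Complex.exp ((θ : ℂ) * Complex.I);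
     (t3 : ℂ), 1, (t1 : ℂ);
     (t2 : ℂ) * Complex.exp (-(θ : ℂ) * Complex.I), (t1 : ℂ), 1]

open Matrix Polynomial Set
open scoped Kronecker

lemma exists_moment_vector {K : ℕ} {x : Fin (K + 1) → ℝ} (hx : Function.Injective x) :
    ∃ y : Fin (K + 1) → ℝ, (∀ j < K, ∑ i, y i * x i ^ j = 0) ∧ ∑ i, y i * x i ^ K = 1 := by
  have hV : IsUnit (vandermonde x)ᵀ := by
    rw [isUnit_iff_isUnit_det, det_transpose, isUnit_iff_ne_zero]
    exact det_vandermonde_ne_zero_iff.mpr hx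
  obtain ⟨y, hy⟩ := mulVec_surjective_iff_isUnit.mpr hV (Pi.single (Fin.last K) 1)
  have hmoment (j : Fin (K + 1)) :
      ∑ i, y i * x i ^ (j : ℕ) = Pi.single (M := fun _ => ℝ) (Fin.last K) 1 j := by
    simp [← hy, mulVec, dotProduct, mul_comm]
  refine ⟨y, fun j hj => ?_, by simpa using hmoment (Fin.last K)⟩
  simpa [Pi.single_apply, Fin.ext_iff, hj.ne] using hmoment ⟨j, by omega⟩

lemma lt_zero_of_hasDerivAt_chain {f : ℕ → ℝ → ℝ} {K : ℕ} {δ : ℝ}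
    (hf : ∀ j < K, ∀ x ∈ Icc 0 δ, HasDerivAt (f j) (f (j + 1) x) x)
    (h0 : ∀ j < K, f j 0 = 0) (hK : ∀ x ∈ Ioc 0 δ, f K x < 0) :
    ∀ x ∈ Ioc 0 δ, f 0 x < 0 := by
  induction K generalizing f with
  | zero => exact hK
  | succ K ih =>
    have hf1 : ∀ x ∈ Ioc 0 δ, f 1 x < 0 :=
      ih (f := fun j => f (j + 1)) (fun j hj => hf (j + 1) (by omega))
        (fun j hj => h0 (j + 1) (by omega)) hK
    have hanti : StrictAntiOn (f 0) (Icc 0 δ) := by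
      refine strictAntiOn_of_hasDerivWithinAt_neg (convex_Icc 0 δ)
        (fun x hx => (hf 0 K.succ_pos x hx).continuousAt.continuousWithinAt)
        (fun x hx => ?_) (fun x hx => ?_) (f' := f 1) <;> rw [interior_Icc] at hx
      · exact (hf 0 K.succ_pos x (Ioo_subset_Icc_self hx)).hasDerivWithinAt
      · exact hf1 x (Ioo_subset_Ioc_self hx)
    intro x hx
    simpa [h0 0 K.succ_pos] using
      hanti ⟨le_rfl, hx.1.le.trans hx.2⟩ (Ioc_subset_Icc_self hx) hx.1

section RpowQuadForm

variable {ι : Type*} [Fintype ι] (α : ℝ) (x y : ι → ℝ)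

/-- The `j`-th derivative of `ε ↦ ∑ i, ∑ l, y i * y l * (1 + ε * x i * x l) ^ α`. -/
noncomputable def rpowQuadFormDeriv (j : ℕ) (ε : ℝ) : ℝ :=
  ∑ i, ∑ l, y i * y l *
    ((descPochhammer ℝ j).eval α * (x i * x l) ^ j * (1 + ε * (x i * x l)) ^ (α - j))

variable {α x}

lemma hasDerivAt_rpowQuadFormDeriv (hx : 0 ≤ x) (j : ℕ) {ε : ℝ} (hε : 0 ≤ ε) :
    HasDerivAt (rpowQuadFormDeriv α x y j) (rpowQuadFormDeriv α x y (j + 1) ε) ε := by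
  refine HasDerivAt.fun_sum fun i _ => HasDerivAt.fun_sum fun l _ => ?_
  set c := x i * x l
  have hbase : 0 < 1 + ε * c := by have := mul_nonneg (hx i) (hx l); positivity
  refine (((((hasDerivAt_id' ε).mul_const c).const_add 1).rpow_const (p := α - j)
    (.inl hbase.ne')).const_mul ((descPochhammer ℝ j).eval α * c ^ j)).const_mul (y i * y l)
    |>.congr_deriv ?_
  rw [descPochhammer_succ_eval, Nat.cast_succ, sub_add_eq_sub_sub]
  ring

lemma rpowQuadFormDeriv_zero_right (j : ℕ) :
    rpowQuadFormDeriv α x y j 0 = (descPochhammer ℝ j).eval α * (∑ i, y i * x i ^ j) ^ 2 := by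
  simp only [rpowQuadFormDeriv, zero_mul, add_zero, Real.one_rpow, mul_one]
  simp_rw [sq, Finset.sum_mul_sum, Finset.mul_sum]
  exact Finset.sum_congr rfl fun i _ => Finset.sum_congr rfl fun l _ => by ring

lemma rpowQuadFormDeriv_zero_left (ε : ℝ) :
    rpowQuadFormDeriv α x y 0 ε = y ⬝ᵥ (of (fun i l => (1 + ε * x i * x l) ^ α) *ᵥ y) := by
  simp only [rpowQuadFormDeriv, dotProduct, mulVec, of_apply, Finset.mul_sum]
  refine Finset.sum_congr rfl fun i _ => Finset.sum_congr rfl fun l _ => ?_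
  simp only [descPochhammer_zero, eval_one, pow_zero, CharP.cast_eq_zero, sub_zero, mul_assoc]
  ring

end RpowQuadForm

theorem exists_not_posSemidef_rpow_one_add_mul {K : ℕ} {α : ℝ}
    (hα : (descPochhammer ℝ K).eval α < 0) {x : Fin (K + 1) → ℝ}
    (hx : Function.Injective x) (hx0 : 0 ≤ x) :
    ∃ ε > 0, ¬ (of fun i j => (1 + ε * x i * x j) ^ α).PosSemidef := by
  obtain ⟨y, hy, hyK⟩ := exists_moment_vector hx
  set D := rpowQuadFormDeriv α x y
  have hDK : D K 0 < 0 := by simpa [D, rpowQuadFormDeriv_zero_right, hyK] using hα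
  obtain ⟨δ, hδ, hDKδ⟩ := Metric.eventually_nhds_iff.mp
    ((hasDerivAt_rpowQuadFormDeriv y hx0 K le_rfl).continuousAt.eventually (gt_mem_nhds hDK))
  have hD0 := lt_zero_of_hasDerivAt_chain (f := D) (K := K) (δ := δ / 2)
    (fun j _ e he => hasDerivAt_rpowQuadFormDeriv y hx0 j he.1)
    (fun j hj => by simp [D, rpowQuadFormDeriv_zero_right, hy j hj])
    (fun e he => hDKδ (by rw [Real.dist_0_eq_abs, abs_of_pos he.1]; linarith [he.2]))
    (δ / 2) ⟨by positivity, le_rfl⟩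
  refine ⟨δ / 2, by positivity, fun h => ?_⟩
  have := h.dotProduct_mulVec_nonneg y
  rw [star_trivial, ← rpowQuadFormDeriv_zero_left] at this
  exact hD0.not_ge this

lemma descPochhammer_eval_neg_of_mem_Ioo {k : ℕ} {α : ℝ} (h₁ : (k : ℝ) < α) (h₂ : α < k + 1) :
    (descPochhammer ℝ (k + 2)).eval α < 0 := by
  rw [descPochhammer_succ_eval, descPochhammer_eval_eq_prod_range]
  refine mul_neg_of_pos_of_neg (Finset.prod_pos fun i hi => ?_) (by push_cast; linarith)
  have : (i : ℝ) ≤ k := by exact_mod_cast Nat.lt_succ_iff.mp (Finset.mem_range.mp hi)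
  linarith

lemma posSemidef_one_add_mul_mul {ι : Type*} [Fintype ι] (x : ι → ℝ) {ε : ℝ} (hε : 0 ≤ ε) :
    (of fun i j => 1 + ε * x i * x j).PosSemidef := by
  have h : (of fun i j => 1 + ε * x i * x j) = vecMulVec 1 1 + ε • vecMulVec x x := by
    ext i j; simp [vecMulVec_apply, mul_assoc]
  rw [h]
  exact (posSemidef_vecMulVec_self_star 1).add ((posSemidef_vecMulVec_self_star x).smul hε)

lemma posSemidef_map_ofReal_iff {ι : Type*} [Fintype ι] {A : Matrix ι ι ℝ} :
    (A.map ((↑) : ℝ → ℂ)).PosSemidef ↔ A.PosSemidef := by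
  refine ⟨fun h => .of_dotProduct_mulVec_nonneg ?_ fun y => ?_, fun h => ?_⟩
  · ext i j
    simpa using congrFun (congrFun h.isHermitian i) j
  · have := h.dotProduct_mulVec_nonneg (fun i => (y i : ℂ))
    have hy : star (fun i => (y i : ℂ)) ⬝ᵥ (A.map (↑) *ᵥ fun i => (y i : ℂ)) =
        ((star y ⬝ᵥ (A *ᵥ y) : ℝ) : ℂ) := by
      simp [dotProduct, mulVec]
    rwa [hy, Complex.zero_le_real] at this
  · open scoped MatrixOrder in
    obtain ⟨B, rfl⟩ := CStarAlgebra.nonneg_iff_eq_star_mul_self.mp h.nonneg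
    change ((star B * B).map Complex.ofRealHom).PosSemidef
    rw [Matrix.map_mul, star_eq_conjTranspose, conjTranspose_map _ (fun _ => by simp)]
    exact posSemidef_conjTranspose_mul_self _

lemma posSemidef_kronecker_one_iff {𝕜 ι κ : Type*} [RCLike 𝕜] [Fintype ι] [Fintype κ]
    [DecidableEq κ] [Nonempty κ] {B : Matrix ι ι 𝕜} :
    (B ⊗ₖ (1 : Matrix κ κ 𝕜)).PosSemidef ↔ B.PosSemidef := by
  refine ⟨fun h => ?_, fun h => h.kronecker .one⟩
  obtain ⟨k⟩ := ‹Nonempty κ›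
  convert h.submatrix (fun i => (i, k))
  ext i j
  simp [kroneckerMap_apply]

section ScalarBlocks

variable {m n : ℕ}

lemma hermFun_smul_one (f : ℝ → ℂ) (c : ℝ) :
    hermFun f (c • (1 : Matrix (Fin m) (Fin m) ℂ)) = f c • 1 := by
  have hB : (c • (1 : Matrix (Fin m) (Fin m) ℂ)).IsHermitian := by
    simp [IsHermitian, conjTranspose_smul]
  have heig : ∀ i, hB.eigenvalues i = c := fun i => by
    have : Nonempty (Fin m) := ⟨i⟩
    simpa [← Algebra.algebraMap_eq_smul_one, spectrum.scalar_eq] using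
      hB.eigenvalues_mem_spectrum_real i
  rw [hermFun, dif_pos hB]
  simp [heig, ← smul_one_eq_diagonal]

lemma hermPow_smul_one (α c : ℝ) :
    hermPow α (c • (1 : Matrix (Fin m) (Fin m) ℂ)) = fPow α c • 1 := by
  rw [hermPow, hermFun_smul_one, ← Complex.coe_smul]

lemma blockM_smul_one (A : Matrix (Fin n) (Fin n) ℝ) :
    blockM (fun s t => A s t • (1 : Matrix (Fin m) (Fin m) ℂ)) = A.map (↑) ⊗ₖ 1 := by
  ext p q
  simp [blockM, kroneckerMap_apply, Complex.real_smul]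

lemma commute_smul_one (a b : ℝ) :
    Commute (a • (1 : Matrix (Fin m) (Fin m) ℂ)) (b • 1) :=
  ((Commute.one_left 1).smul_left a).smul_right b

lemma posSemidef_blockM_smul_one_iff [NeZero m] (A : Matrix (Fin n) (Fin n) ℝ) :
    (blockM fun s t => A s t • (1 : Matrix (Fin m) (Fin m) ℂ)).PosSemidef ↔ A.PosSemidef := by
  rw [blockM_smul_one, posSemidef_kronecker_one_iff, posSemidef_map_ofReal_iff]

end ScalarBlocks

theorem exists_blocks_not_posSemidef_hermPow {m n K : ℕ} [NeZero m] (hK : K + 1 ≤ n) {α : ℝ}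
    (hα : (descPochhammer ℝ K).eval α < 0) :
    ∃ H : Fin n → Fin n → Matrix (Fin m) (Fin m) ℂ,
      (∀ s t, (H s t).PosDef) ∧
      (∀ s t i j, (H s t i j).im = 0) ∧
      (∀ s t, (H s t).IsSymm) ∧
      (∀ s t s' t', Commute (H s t) (H s' t')) ∧
      (blockM H).PosSemidef ∧
      ¬ (blockM fun s t => hermPow α (H s t)).PosSemidef := by
  obtain ⟨ε, hε, hnot⟩ := exists_not_posSemidef_rpow_one_add_mul hα
    (x := fun i => (i : ℝ)) (Nat.cast_injective.comp Fin.val_injective) fun i => i.val.cast_nonneg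
  set A : Matrix (Fin n) (Fin n) ℝ := of fun s t => 1 + ε * s * t
  have hA (s t : Fin n) : 0 < A s t := by simp only [A, of_apply]; positivity
  refine ⟨fun s t => A s t • 1, fun s t => PosDef.one.smul (hA s t), fun s t i j => ?_,
    fun s t => by simp [IsSymm], fun s t s' t' => commute_smul_one _ _,
    (posSemidef_blockM_smul_one_iff A).mpr (posSemidef_one_add_mul_mul _ hε.le), ?_⟩
  · by_cases i = j <;> simp [one_apply, *]
  · simp_rw [hermPow_smul_one]
    change ¬ (blockM fun s t => A.map (fPow α) s t • (1 : Matrix (Fin m) (Fin m) ℂ)).PosSemidef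
    rw [posSemidef_blockM_smul_one_iff]
    refine fun h => hnot ?_
    convert h.submatrix (Fin.castLE hK) using 1
    ext i j
    have hpos : (0 : ℝ) < 1 + ε * i * j := by positivity
    simp [A, fPow, hpos.ne']

/-- Theorem 2, negative parts: (a) if `α > 0` and `α ∉ ℕ ∪ [n-2, ∞)`, there are pairwise
commuting positive semidefinite blocks forming a positive semidefinite block matrix whose
blockwise `α`-th power is not positive semidefinite; (b) if `α < 0`, there are pairwise
commuting real symmetric positive definite blocks with the same failure. -/
theorem blockwise_power_commuting_counterexamples (m n : ℕ) (hm : 2 ≤ m) (hn : 2 ≤ n) :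
    (∀ α : ℝ, 0 < α → ¬ ((∃ k : ℕ, 1 ≤ k ∧ α = k) ∨ (n : ℝ) - 2 ≤ α) →
      ∃ H : Fin n → Fin n → Matrix (Fin m) (Fin m) ℂ,
        (∀ s t, (H s t).PosSemidef) ∧
        (∀ s t s' t', Commute (H s t) (H s' t')) ∧
        (blockM H).PosSemidef ∧
        ¬ (blockM fun s t => hermPow α (H s t)).PosSemidef) ∧
    (∀ α : ℝ, α < 0 →
      ∃ H : Fin n → Fin n → Matrix (Fin m) (Fin m) ℂ,
        (∀ s t, (H s t).PosDef) ∧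
        (∀ s t i j, (H s t i j).im = 0) ∧
        (∀ s t, (H s t).IsSymm) ∧
        (∀ s t s' t', Commute (H s t) (H s' t')) ∧
        (blockM H).PosSemidef ∧
        ¬ (blockM fun s t => hermPow α (H s t)).PosSemidef) := by
  have : NeZero m := ⟨by omega⟩
  refine ⟨fun α hα hα' => ?_, fun α hα =>
    exists_blocks_not_posSemidef_hermPow (K := 1) hn (by simpa using hα)⟩
  obtain ⟨hα_nat, hα_lt⟩ := not_or.mp hα'
  set k := ⌊α⌋₊
  have hk : (k : ℝ) < α := (Nat.floor_le hα.le).lt_of_ne fun h =>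
    hα_nat ⟨k, Nat.cast_pos.mp (h ▸ hα), h.symm⟩
  have hkn : k + 2 + 1 ≤ n := by
    have : (k : ℝ) + 2 < n := by linarith [not_le.mp hα_lt]
    exact_mod_cast this
  obtain ⟨H, hpd, -, -, hcomm, hpsd, hpow⟩ := exists_blocks_not_posSemidef_hermPow (m := m) hkn
    (descPochhammer_eval_neg_of_mem_Ioo hk (Nat.lt_floor_add_one α))
  exact ⟨H, fun s t => (hpd s t).posSemidef, hcomm, hpsd, hpow⟩
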